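/- Up to isomorphism, there are exactly two simple ℤ/2-graded commutative algebras A over ℂ with even part A⁰ = ℂ·ε (ε acting as described) admitting a nontrivial odd derivation: the tiny Kaplansky superalgebra K₃ (with ε·b = (1/2)b) and its deformation with ε·b = (1/2)b + a; both are 3-dimensional with basis {ε; a, b}, ε·a = (1/2)a, and a·b = ε. -/

import Mathlib

/-! Put `b = T ε`. The Leibniz rule at `ε · ε` and `ε · b` gives `ε · b = b / 2` and `T b = 0`;
at a product of odd elements it gives `c • b = f • ε · y - g • ε · x` whenever `T x = f • ε`,
`T y = g • ε` and `x · y = c • ε`. Simplicity enters through two ideals: `A1` itself, so some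
odd product is nonzero, and `A0 ⊔ W` for a subspace `W ≤ A1` containing `ε · A1`, so such a `W` is all of `A1`.
This forces `b ≠ 0` and yields an odd `a` with `T a = 2 • ε`; then `a · b = ε`, `A1` is spanned by
`ε · a` and `b`, and comparing values of `T` gives `ε · a = a / 2 + μ • b`. Rescaling by a square
root of `-1 / μ` turns `μ` into `0` or `1`. The two algebras differ in whether every square `x · x`
is a multiple of `x`. -/

/-- The family of 3-dimensional ℤ/2-graded commutative algebras on basis `{ε; a, b}`
(`ε` even, `a, b` odd) with `ε·ε = ε`, `ε·a = (1/2)a`, `ε·b = (1/2)b + λ·a`,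
`a·b = ε`, written in coordinates `(x₁, x₂, x₃) = x₁ε + x₂a + x₃b`.  For `λ = 0`
this is the tiny Kaplansky superalgebra `K₃`. -/
noncomputable def K3mulC (lam : ℂ) (x y : ℂ × ℂ × ℂ) : ℂ × ℂ × ℂ :=
  (x.1 * y.1 + x.2.1 * y.2.2 - x.2.2 * y.2.1,
   (1 / 2 : ℂ) * (x.1 * y.2.1 + x.2.1 * y.1) + lam * (x.1 * y.2.2 + x.2.2 * y.1),
   (1 / 2 : ℂ) * (x.1 * y.2.2 + x.2.2 * y.1))

open Submodule

section Superalgebra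

variable {K A : Type*} [Field K] [AddCommGroup A] [Module K A]

def IsTwoSidedIdeal (mul : A →ₗ[K] A →ₗ[K] A) (I : Submodule K A) : Prop :=
  ∀ x ∈ I, ∀ y : A, mul x y ∈ I ∧ mul y x ∈ I

variable {mul : A →ₗ[K] A →ₗ[K] A} {A0 A1 : Submodule K A} {ε : A} {T : A →ₗ[K] A}

theorem mul_self_eq_zero_of_anticomm [NeZero (2 : K)]
    (hcomm1 : ∀ x ∈ A1, ∀ y ∈ A1, mul x y = -mul y x) {x : A} (hx : x ∈ A1) :
    mul x x = 0 := by
  have h : (2 : K) • mul x x = 0 := by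
    rw [two_smul]
    nth_rewrite 2 [hcomm1 x hx x hx]
    exact add_neg_cancel _
  exact (smul_eq_zero.mp h).resolve_left two_ne_zero

theorem mul_left_eq_self_of_mem_span (hεsq : mul ε ε = ε) {z : A} (hz : z ∈ span K {ε}) :
    mul ε z = z := by
  obtain ⟨c, rfl⟩ := mem_span_singleton.mp hz
  rw [map_smul, hεsq]

theorem isTwoSidedIdeal_of_mul_mem (hcompl : IsCompl A0 A1)
    (hcomm0 : ∀ x ∈ A0, ∀ y : A, mul x y = mul y x) {I : Submodule K A}
    (h0 : ∀ x ∈ I, ∀ y ∈ A0, mul x y ∈ I)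
    (h1 : ∀ x ∈ I, ∀ y ∈ A1, mul x y ∈ I ∧ mul y x ∈ I) : IsTwoSidedIdeal mul I := by
  intro x hx y
  obtain ⟨y0, hy0, y1, hy1, rfl⟩ := mem_sup.mp (hcompl.sup_eq_top ▸ mem_top : y ∈ A0 ⊔ A1)
  rw [map_add, map_add, LinearMap.add_apply, hcomm0 y0 hy0 x]
  exact ⟨add_mem (h0 x hx y0 hy0) (h1 x hx y1 hy1).1, add_mem (h0 x hx y0 hy0) (h1 x hx y1 hy1).2⟩

theorem exists_odd_mul_ne_zero (hcompl : IsCompl A0 A1)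
    (h01 : ∀ x ∈ A0, ∀ y ∈ A1, mul x y ∈ A1)
    (hcomm0 : ∀ x ∈ A0, ∀ y : A, mul x y = mul y x) (hε0 : ε ≠ 0) (hεA0 : ε ∈ A0)
    (hsimple : ∀ I : Submodule K A, IsTwoSidedIdeal mul I → I = ⊥ ∨ I = ⊤)
    (hT0 : ∀ x ∈ A0, T x ∈ A1) (hTne : T ≠ 0) :
    ∃ x ∈ A1, ∃ y ∈ A1, mul x y ≠ 0 := by
  by_contra! h
  have hA1 : IsTwoSidedIdeal mul A1 := isTwoSidedIdeal_of_mul_mem hcompl hcomm0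
    (fun x hx y hy => hcomm0 y hy x ▸ h01 y hy x hx)
    (fun x hx y hy => by simp [h x hx y hy, h y hy x hx])
  rcases hsimple A1 hA1 with h1 | h1
  · have hA0 : A0 = ⊤ := eq_top_of_isCompl_bot (h1 ▸ hcompl)
    exact hTne (LinearMap.ext fun x => by simpa [h1] using hT0 x (hA0 ▸ mem_top))
  · exact hε0 (by simpa [eq_bot_of_isCompl_top (h1 ▸ hcompl)] using hεA0)

theorem eq_odd_of_mul_left_mem (hcompl : IsCompl A0 A1)
    (h11 : ∀ x ∈ A1, ∀ y ∈ A1, mul x y ∈ A0)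
    (hcomm0 : ∀ x ∈ A0, ∀ y : A, mul x y = mul y x)
    (hcomm1 : ∀ x ∈ A1, ∀ y ∈ A1, mul x y = -mul y x)
    (hε0 : ε ≠ 0) (hA0 : A0 = span K {ε}) (hεsq : mul ε ε = ε)
    (hsimple : ∀ I : Submodule K A, IsTwoSidedIdeal mul I → I = ⊥ ∨ I = ⊤)
    {W : Submodule K A} (hW : W ≤ A1) (hεW : ∀ y ∈ A1, mul ε y ∈ W) : W = A1 := by
  have hεA0 : ε ∈ A0 := hA0 ▸ mem_span_singleton_self ε
  have hεI : ∀ x ∈ A0 ⊔ W, mul ε x ∈ A0 ⊔ W := by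
    intro x hx
    obtain ⟨x0, hx0, w, hw, rfl⟩ := mem_sup.mp hx
    rw [map_add, mul_left_eq_self_of_mem_span hεsq (hA0 ▸ hx0)]
    exact add_mem (mem_sup_left hx0) (mem_sup_right (hεW w (hW hw)))
  have hI : IsTwoSidedIdeal mul (A0 ⊔ W) := by
    refine isTwoSidedIdeal_of_mul_mem hcompl hcomm0 (fun x hx y hy => ?_) (fun x hx y hy => ?_)
    · obtain ⟨c, rfl⟩ := mem_span_singleton.mp (hA0 ▸ hy)
      rw [map_smul, ← hcomm0 ε hεA0]
      exact smul_mem _ c (hεI x hx)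
    · obtain ⟨x0, hx0, w, hw, rfl⟩ := mem_sup.mp hx
      obtain ⟨c, rfl⟩ := mem_span_singleton.mp (hA0 ▸ hx0)
      have hwy : mul w y ∈ A0 ⊔ W := mem_sup_left (h11 w (hW hw) y hy)
      have hεy : c • mul ε y ∈ A0 ⊔ W := smul_mem _ c (mem_sup_right (hεW y hy))
      simp only [map_add, LinearMap.add_apply, map_smul, LinearMap.smul_apply,
        ← hcomm0 ε hεA0 y, hcomm1 y hy w (hW hw)]
      exact ⟨add_mem hεy hwy, add_mem hεy (neg_mem hwy)⟩
  rcases hsimple _ hI with h | h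
  · exact absurd (h ▸ mem_sup_left hεA0) (by simpa using hε0)
  · refine eq_of_le_of_inf_le_of_sup_le hW ?_ ?_ (z := A0)
    · simp [hcompl.symm.inf_eq_bot]
    · rw [sup_comm W, h]; exact le_top

theorem two_smul_mul_derivation_self (hεA0 : ε ∈ A0)
    (hcomm0 : ∀ x ∈ A0, ∀ y : A, mul x y = mul y x) (hεsq : mul ε ε = ε)
    (hLeib0 : ∀ x ∈ A0, ∀ y : A, T (mul x y) = mul (T x) y + mul x (T y)) :
    (2 : K) • mul ε (T ε) = T ε := by
  have h := hLeib0 ε hεA0 ε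
  rw [hεsq, ← hcomm0 ε hεA0 (T ε)] at h
  rw [two_smul]
  exact h.symm

theorem derivation_derivation_self [NeZero (2 : K)] (hA0 : A0 = span K {ε})
    (hcomm0 : ∀ x ∈ A0, ∀ y : A, mul x y = mul y x)
    (hcomm1 : ∀ x ∈ A1, ∀ y ∈ A1, mul x y = -mul y x) (hεsq : mul ε ε = ε)
    (hT0 : ∀ x ∈ A0, T x ∈ A1) (hT1 : ∀ x ∈ A1, T x ∈ A0)
    (hLeib0 : ∀ x ∈ A0, ∀ y : A, T (mul x y) = mul (T x) y + mul x (T y)) :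
    T (T ε) = 0 := by
  have hεA0 : ε ∈ A0 := hA0 ▸ mem_span_singleton_self ε
  have hb : T ε ∈ A1 := hT0 ε hεA0
  have hTb : T (T ε) ∈ span K {ε} := hA0 ▸ hT1 (T ε) hb
  have h := hLeib0 ε hεA0 (T ε)
  rw [mul_self_eq_zero_of_anticomm hcomm1 hb, zero_add,
    mul_left_eq_self_of_mem_span hεsq hTb] at h
  have h2 := congrArg T (two_smul_mul_derivation_self hεA0 hcomm0 hεsq hLeib0)
  rw [map_smul, h, two_smul] at h2
  simpa using h2

theorem smul_derivation_self_eq (hεA0 : ε ∈ A0)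
    (hcomm0 : ∀ x ∈ A0, ∀ y : A, mul x y = mul y x)
    (hLeib1 : ∀ x ∈ A1, ∀ y : A, T (mul x y) = mul (T x) y - mul x (T y))
    {x y : A} (hx : x ∈ A1) {f g c : K} (hTx : T x = f • ε) (hTy : T y = g • ε)
    (hxy : mul x y = c • ε) : c • T ε = f • mul ε y - g • mul ε x := by
  have h := hLeib1 x hx y
  simp only [hxy, hTx, hTy, map_smul, LinearMap.smul_apply, ← hcomm0 ε hεA0 x] at h
  exact h

theorem exists_derivation_eq_of_ne_zero (hA0 : A0 = span K {ε})
    (hT1 : ∀ x ∈ A1, T x ∈ A0) {a : A} (ha : a ∈ A1) (hTa : T a ≠ 0) :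
    ∃ a' ∈ A1, T a' = ε := by
  obtain ⟨f, hf⟩ := mem_span_singleton.mp (hA0 ▸ hT1 a ha)
  have hf0 : f ≠ 0 := by rintro rfl; exact hTa (by simp [← hf])
  exact ⟨f⁻¹ • a, smul_mem _ _ ha, by rw [map_smul, ← hf, inv_smul_smul₀ hf0]⟩

theorem exists_odd_derivation_ne_zero (hcompl : IsCompl A0 A1) (hA0 : A0 = span K {ε})
    (hTε : T ε = 0) (hTne : T ≠ 0) : ∃ a ∈ A1, T a ≠ 0 := by
  by_contra! h
  refine hTne (LinearMap.ext fun x => ?_)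
  obtain ⟨x0, hx0, x1, hx1, rfl⟩ := mem_sup.mp (hcompl.sup_eq_top ▸ mem_top : x ∈ A0 ⊔ A1)
  obtain ⟨c, rfl⟩ := mem_span_singleton.mp (hA0 ▸ hx0)
  simp [hTε, h x1 hx1]

theorem derivation_self_ne_zero [NeZero (2 : K)] (hcompl : IsCompl A0 A1)
    (h01 : ∀ x ∈ A0, ∀ y ∈ A1, mul x y ∈ A1)
    (h11 : ∀ x ∈ A1, ∀ y ∈ A1, mul x y ∈ A0)
    (hcomm0 : ∀ x ∈ A0, ∀ y : A, mul x y = mul y x)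
    (hcomm1 : ∀ x ∈ A1, ∀ y ∈ A1, mul x y = -mul y x)
    (hε0 : ε ≠ 0) (hA0 : A0 = span K {ε}) (hεsq : mul ε ε = ε)
    (hsimple : ∀ I : Submodule K A, IsTwoSidedIdeal mul I → I = ⊥ ∨ I = ⊤)
    (hT0 : ∀ x ∈ A0, T x ∈ A1) (hT1 : ∀ x ∈ A1, T x ∈ A0)
    (hLeib1 : ∀ x ∈ A1, ∀ y : A, T (mul x y) = mul (T x) y - mul x (T y))
    (hTne : T ≠ 0) : T ε ≠ 0 := by
  intro hb
  have hεA0 : ε ∈ A0 := hA0 ▸ mem_span_singleton_self ε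
  obtain ⟨a1, ha1, hTa1⟩ := exists_odd_derivation_ne_zero hcompl hA0 hb hTne
  obtain ⟨a, ha, hTa⟩ := exists_derivation_eq_of_ne_zero hA0 hT1 ha1 hTa1
  -- With `T ε = 0` and `T a = ε`, the Leibniz rule for `a · y` puts `ε · y` on the line through
  -- `ε · a`; so `A1` is that line and all odd products vanish.
  have hspan : span K {mul ε a} = A1 := by
    refine eq_odd_of_mul_left_mem hcompl h11 hcomm0 hcomm1 hε0 hA0 hεsq hsimple
      (span_le.mpr (by simpa using h01 ε hεA0 a ha)) fun y hy => ?_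
    obtain ⟨g, hg⟩ := mem_span_singleton.mp (hA0 ▸ hT1 y hy)
    obtain ⟨c, hc⟩ := mem_span_singleton.mp (hA0 ▸ h11 a ha y hy)
    have h := smul_derivation_self_eq hεA0 hcomm0 hLeib1 ha (f := 1) (by rw [one_smul, hTa])
      hg.symm hc.symm
    rw [hb, smul_zero, one_smul, eq_comm, sub_eq_zero] at h
    rw [h]
    exact smul_mem _ g (mem_span_singleton_self _)
  obtain ⟨x, hx, y, hy, hxy⟩ :=
    exists_odd_mul_ne_zero hcompl h01 hcomm0 hε0 hεA0 hsimple hT0 hTne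
  obtain ⟨s, rfl⟩ := mem_span_singleton.mp (hspan ▸ hx)
  obtain ⟨t, rfl⟩ := mem_span_singleton.mp (hspan ▸ hy)
  exact hxy (by simp [mul_self_eq_zero_of_anticomm hcomm1 (h01 ε hεA0 a ha)])

theorem exists_odd_derivation_eq [NeZero (2 : K)] (hcompl : IsCompl A0 A1)
    (h01 : ∀ x ∈ A0, ∀ y ∈ A1, mul x y ∈ A1)
    (h11 : ∀ x ∈ A1, ∀ y ∈ A1, mul x y ∈ A0)
    (hcomm0 : ∀ x ∈ A0, ∀ y : A, mul x y = mul y x)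
    (hcomm1 : ∀ x ∈ A1, ∀ y ∈ A1, mul x y = -mul y x)
    (hε0 : ε ≠ 0) (hA0 : A0 = span K {ε}) (hεsq : mul ε ε = ε)
    (hsimple : ∀ I : Submodule K A, IsTwoSidedIdeal mul I → I = ⊥ ∨ I = ⊤)
    (hT0 : ∀ x ∈ A0, T x ∈ A1) (hT1 : ∀ x ∈ A1, T x ∈ A0)
    (hLeib1 : ∀ x ∈ A1, ∀ y : A, T (mul x y) = mul (T x) y - mul x (T y))
    (hTne : T ≠ 0) : ∃ a ∈ A1, T a = ε := by
  have hεA0 : ε ∈ A0 := hA0 ▸ mem_span_singleton_self ε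
  have hb := derivation_self_ne_zero hcompl h01 h11 hcomm0 hcomm1 hε0 hA0 hεsq hsimple hT0 hT1
    hLeib1 hTne
  obtain ⟨a, ha, hTa⟩ : ∃ a ∈ A1, T a ≠ 0 := by
    by_contra! h
    obtain ⟨x, hx, y, hy, hxy⟩ :=
      exists_odd_mul_ne_zero hcompl h01 hcomm0 hε0 hεA0 hsimple hT0 hTne
    obtain ⟨c, hc⟩ := mem_span_singleton.mp (hA0 ▸ h11 x hx y hy)
    have h' := smul_derivation_self_eq hεA0 hcomm0 hLeib1 hx (f := 0) (g := 0)
      (by rw [h x hx, zero_smul]) (by rw [h y hy, zero_smul]) hc.symm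
    rw [zero_smul, zero_smul, sub_zero, smul_eq_zero] at h'
    exact hxy (by rw [← hc, h'.resolve_right hb, zero_smul])
  exact exists_derivation_eq_of_ne_zero hA0 hT1 ha hTa

theorem span_mul_left_derivation_eq [NeZero (2 : K)] (hcompl : IsCompl A0 A1)
    (h01 : ∀ x ∈ A0, ∀ y ∈ A1, mul x y ∈ A1)
    (h11 : ∀ x ∈ A1, ∀ y ∈ A1, mul x y ∈ A0)
    (hcomm0 : ∀ x ∈ A0, ∀ y : A, mul x y = mul y x)
    (hcomm1 : ∀ x ∈ A1, ∀ y ∈ A1, mul x y = -mul y x)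
    (hε0 : ε ≠ 0) (hA0 : A0 = span K {ε}) (hεsq : mul ε ε = ε)
    (hsimple : ∀ I : Submodule K A, IsTwoSidedIdeal mul I → I = ⊥ ∨ I = ⊤)
    (hT0 : ∀ x ∈ A0, T x ∈ A1) (hT1 : ∀ x ∈ A1, T x ∈ A0)
    (hLeib1 : ∀ x ∈ A1, ∀ y : A, T (mul x y) = mul (T x) y - mul x (T y))
    {a : A} (ha : a ∈ A1) (hTa : T a = (2 : K) • ε) :
    span K {mul ε a, T ε} = A1 := by
  have hεA0 : ε ∈ A0 := hA0 ▸ mem_span_singleton_self ε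
  refine eq_odd_of_mul_left_mem hcompl h11 hcomm0 hcomm1 hε0 hA0 hεsq hsimple
    (span_le.mpr (Set.insert_subset_iff.mpr ⟨h01 ε hεA0 a ha, by simpa using hT0 ε hεA0⟩))
    fun y hy => ?_
  obtain ⟨g, hg⟩ := mem_span_singleton.mp (hA0 ▸ hT1 y hy)
  obtain ⟨c, hc⟩ := mem_span_singleton.mp (hA0 ▸ h11 y hy a ha)
  have h := smul_derivation_self_eq hεA0 hcomm0 hLeib1 hy hg.symm hTa hc.symm
  have h2 : (2 : K) • mul ε y = g • mul ε a - c • T ε := by rw [h]; abel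
  rw [← inv_smul_smul₀ (two_ne_zero (α := K)) (mul ε y), h2]
  exact smul_mem _ _ (sub_mem (smul_mem _ _ (subset_span (by simp)))
    (smul_mem _ _ (subset_span (by simp))))

theorem mul_derivation_self_eq [NeZero (2 : K)] (hA0 : A0 = span K {ε})
    (h11 : ∀ x ∈ A1, ∀ y ∈ A1, mul x y ∈ A0)
    (hcomm0 : ∀ x ∈ A0, ∀ y : A, mul x y = mul y x)
    (hcomm1 : ∀ x ∈ A1, ∀ y ∈ A1, mul x y = -mul y x) (hεsq : mul ε ε = ε)
    (hT0 : ∀ x ∈ A0, T x ∈ A1) (hT1 : ∀ x ∈ A1, T x ∈ A0)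
    (hLeib0 : ∀ x ∈ A0, ∀ y : A, T (mul x y) = mul (T x) y + mul x (T y))
    (hLeib1 : ∀ x ∈ A1, ∀ y : A, T (mul x y) = mul (T x) y - mul x (T y))
    (hb0 : T ε ≠ 0) {a : A} (ha : a ∈ A1) (hTa : T a = (2 : K) • ε) :
    mul a (T ε) = ε := by
  have hεA0 : ε ∈ A0 := hA0 ▸ mem_span_singleton_self ε
  obtain ⟨c, hc⟩ := mem_span_singleton.mp (hA0 ▸ h11 a ha (T ε) (hT0 ε hεA0))
  have h := smul_derivation_self_eq hεA0 hcomm0 hLeib1 ha hTa (g := 0)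
    (by rw [derivation_derivation_self hA0 hcomm0 hcomm1 hεsq hT0 hT1 hLeib0, zero_smul]) hc.symm
  rw [zero_smul, sub_zero, two_smul_mul_derivation_self hεA0 hcomm0 hεsq hLeib0] at h
  rw [← hc, smul_left_injective K hb0 (h.trans (one_smul K _).symm), one_smul]

theorem exists_odd_pair [NeZero (2 : K)] (hcompl : IsCompl A0 A1)
    (h01 : ∀ x ∈ A0, ∀ y ∈ A1, mul x y ∈ A1)
    (h11 : ∀ x ∈ A1, ∀ y ∈ A1, mul x y ∈ A0)
    (hcomm0 : ∀ x ∈ A0, ∀ y : A, mul x y = mul y x)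
    (hcomm1 : ∀ x ∈ A1, ∀ y ∈ A1, mul x y = -mul y x)
    (hε0 : ε ≠ 0) (hA0 : A0 = span K {ε}) (hεsq : mul ε ε = ε)
    (hsimple : ∀ I : Submodule K A, IsTwoSidedIdeal mul I → I = ⊥ ∨ I = ⊤)
    (hT0 : ∀ x ∈ A0, T x ∈ A1) (hT1 : ∀ x ∈ A1, T x ∈ A0)
    (hLeib0 : ∀ x ∈ A0, ∀ y : A, T (mul x y) = mul (T x) y + mul x (T y))
    (hLeib1 : ∀ x ∈ A1, ∀ y : A, T (mul x y) = mul (T x) y - mul x (T y))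
    (hTne : T ≠ 0) :
    ∃ a b : A, ∃ μ : K, mul ε a = (2 : K)⁻¹ • a + μ • b ∧ mul ε b = (2 : K)⁻¹ • b ∧
      mul a b = ε ∧ mul b a = -ε ∧ span K {a, b} = A1 := by
  have hεA0 : ε ∈ A0 := hA0 ▸ mem_span_singleton_self ε
  have hb : T ε ∈ A1 := hT0 ε hεA0
  have hb0 := derivation_self_ne_zero hcompl h01 h11 hcomm0 hcomm1 hε0 hA0 hεsq hsimple hT0 hT1
    hLeib1 hTne
  have hTb := derivation_derivation_self hA0 hcomm0 hcomm1 hεsq hT0 hT1 hLeib0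
  obtain ⟨a0, ha0, hTa0⟩ := exists_odd_derivation_eq hcompl h01 h11 hcomm0 hcomm1 hε0 hA0 hεsq
    hsimple hT0 hT1 hLeib1 hTne
  obtain ⟨a, ha, hTa⟩ : ∃ a ∈ A1, T a = (2 : K) • ε :=
    ⟨(2 : K) • a0, smul_mem _ _ ha0, by rw [map_smul, hTa0]⟩
  have hab := mul_derivation_self_eq hA0 h11 hcomm0 hcomm1 hεsq hT0 hT1 hLeib0 hLeib1 hb0 ha hTa
  have hba : mul (T ε) a = -ε := by rw [hcomm1 _ hb a ha, hab]
  have hTu : T (mul ε a) = ε := by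
    rw [hLeib0 ε hεA0 a, hTa, hba, map_smul, hεsq, two_smul]
    abel
  have hspan := span_mul_left_derivation_eq hcompl h01 h11 hcomm0 hcomm1 hε0 hA0 hεsq hsimple
    hT0 hT1 hLeib1 ha hTa
  obtain ⟨p, q, hpq⟩ := mem_span_pair.mp (hspan ▸ ha)
  obtain rfl : p = 2 := by
    have h := congrArg T hpq
    rw [map_add, map_smul, map_smul, hTu, hTb, smul_zero, add_zero, hTa] at h
    exact smul_left_injective K hε0 h
  have hεa : mul ε a = (2 : K)⁻¹ • a + -(2⁻¹ * q) • T ε := by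
    rw [← inv_smul_smul₀ (two_ne_zero (α := K)) (mul ε a), eq_sub_of_add_eq hpq]
    module
  refine ⟨a, T ε, -(2⁻¹ * q), hεa,
    (eq_inv_smul_iff₀ two_ne_zero).mpr (two_smul_mul_derivation_self hεA0 hcomm0 hεsq hLeib0),
    hab, hba, le_antisymm (span_le.mpr (Set.insert_subset_iff.mpr ⟨ha, by simpa using hb⟩)) ?_⟩
  rw [← hspan, span_le, Set.insert_subset_iff, hεa]
  exact ⟨add_mem (smul_mem _ _ (subset_span (by simp))) (smul_mem _ _ (subset_span (by simp))),
    by simpa using subset_span (by simp)⟩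

theorem exists_normal_form [IsAlgClosed K] {a b : A} {μ : K}
    (hεa : mul ε a = (2 : K)⁻¹ • a + μ • b) (hεb : mul ε b = (2 : K)⁻¹ • b)
    (hab : mul a b = ε) (hba : mul b a = -ε) :
    ∃ lam : K, (lam = 0 ∨ lam = 1) ∧ ∃ a' b' : A, mul ε a' = (2 : K)⁻¹ • a' ∧
      mul ε b' = (2 : K)⁻¹ • b' + lam • a' ∧ mul a' b' = ε ∧
      span K {a', b'} = span K {a, b} := by
  by_cases hμ : μ = 0
  · exact ⟨0, .inl rfl, a, b, by rw [hεa, hμ, zero_smul, add_zero],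
      by rw [hεb, zero_smul, add_zero], hab, rfl⟩
  -- With `γ² μ = -1`, the pair `(γ μ b, γ a)` is the normal form with `λ = 1`.
  obtain ⟨γ, hγ⟩ := IsAlgClosed.exists_pow_nat_eq (-μ⁻¹) two_pos
  have hγ0 : γ ≠ 0 := by rintro rfl; simp [hμ] at hγ
  have hγγμ : γ * (γ * μ) = -1 := by
    rw [← mul_assoc, ← sq, hγ, neg_mul, inv_mul_cancel₀ hμ]
  refine ⟨1, .inr rfl, (γ * μ) • b, γ • a, ?_, ?_, ?_, ?_⟩
  · rw [map_smul, hεb]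
    module
  · rw [map_smul, hεa]
    module
  · rw [map_smul, map_smul, LinearMap.smul_apply, hba, smul_smul, hγγμ, smul_neg, neg_one_smul,
      neg_neg]
  · rw [span_insert, span_insert, span_singleton_smul_eq (mul_ne_zero hγ0 hμ).isUnit,
      span_singleton_smul_eq hγ0.isUnit, sup_comm]

theorem bijective_coprod_toSpanSingleton (hcompl : IsCompl A0 A1) (hA0 : A0 = span K {ε})
    (hε0 : ε ≠ 0) {a b : A} (hspan : span K {a, b} = A1) (haa : mul a a = 0)
    (hbb : mul b b = 0) (hab : mul a b = ε) :
    Function.Bijective ((LinearMap.toSpanSingleton K A ε).coprod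
      ((LinearMap.toSpanSingleton K A a).coprod (LinearMap.toSpanSingleton K A b))) := by
  refine ⟨(injective_iff_map_eq_zero _).mpr ?_, LinearMap.range_eq_top.mp ?_⟩
  · rintro ⟨p1, p2, p3⟩ h
    simp only [LinearMap.coprod_apply, LinearMap.toSpanSingleton_apply] at h
    have hodd : p2 • a + p3 • b ∈ A1 := hspan ▸ mem_span_pair.mpr ⟨p2, p3, rfl⟩
    have heven : p1 • ε = 0 := by
      refine disjoint_def.mp hcompl.disjoint _ (hA0 ▸ smul_mem _ _ (mem_span_singleton_self ε)) ?_
      rw [eq_neg_of_add_eq_zero_left h]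
      exact neg_mem hodd
    have hp1 : p1 = 0 := (smul_eq_zero.mp heven).resolve_right hε0
    rw [heven, zero_add] at h
    have hp2 : p2 • ε = 0 := by simpa [haa, hab, hbb] using congrArg (fun x => mul x b) h
    have hp3 : p3 • ε = 0 := by simpa [haa, hab, hbb] using congrArg (mul a) h
    simp [hp1, (smul_eq_zero.mp hp2).resolve_right hε0, (smul_eq_zero.mp hp3).resolve_right hε0]
  · refine eq_top_iff.mpr (hcompl.sup_eq_top ▸ sup_le ?_ ?_)
    · rw [hA0, span_le, Set.singleton_subset_iff]
      exact ⟨(1, 0, 0), by simp⟩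
    · rw [← hspan, span_le, Set.insert_subset_iff, Set.singleton_subset_iff]
      exact ⟨⟨(0, 1, 0), by simp⟩, ⟨(0, 0, 1), by simp⟩⟩

end Superalgebra

theorem exists_linearEquiv_K3mulC {A : Type*} [AddCommGroup A] [Module ℂ A]
    {mul : A →ₗ[ℂ] A →ₗ[ℂ] A} {A0 A1 : Submodule ℂ A} {ε a b : A} {lam : ℂ}
    (hcompl : IsCompl A0 A1) (hcomm0 : ∀ x ∈ A0, ∀ y : A, mul x y = mul y x)
    (hcomm1 : ∀ x ∈ A1, ∀ y ∈ A1, mul x y = -mul y x)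
    (hε0 : ε ≠ 0) (hA0 : A0 = span ℂ {ε}) (hεsq : mul ε ε = ε)
    (hεa : mul ε a = (2 : ℂ)⁻¹ • a) (hεb : mul ε b = (2 : ℂ)⁻¹ • b + lam • a)
    (hab : mul a b = ε) (hspan : span ℂ {a, b} = A1) :
    ∃ e : A ≃ₗ[ℂ] ℂ × ℂ × ℂ, ∀ x y : A, e (mul x y) = K3mulC lam (e x) (e y) := by
  have hεA0 : ε ∈ A0 := hA0 ▸ mem_span_singleton_self ε
  have ha : a ∈ A1 := hspan ▸ subset_span (by simp)
  have hb : b ∈ A1 := hspan ▸ subset_span (by simp)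
  have haa := mul_self_eq_zero_of_anticomm hcomm1 ha
  have hbb := mul_self_eq_zero_of_anticomm hcomm1 hb
  have hba : mul b a = -ε := by rw [hcomm1 b hb a ha, hab]
  set f := (LinearMap.toSpanSingleton ℂ A ε).coprod
    ((LinearMap.toSpanSingleton ℂ A a).coprod (LinearMap.toSpanSingleton ℂ A b))
  have hf : ∀ p q, mul (f p) (f q) = f (K3mulC lam p q) := by
    rintro ⟨p1, p2, p3⟩ ⟨q1, q2, q3⟩
    simp only [f, LinearMap.coprod_apply, LinearMap.toSpanSingleton_apply, map_add, map_smul,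
      LinearMap.add_apply, LinearMap.smul_apply, ← hcomm0 ε hεA0 a, ← hcomm0 ε hεA0 b,
      hεsq, hεa, hεb, hab, hba, haa, hbb, K3mulC]
    module
  let e := LinearEquiv.ofBijective f
    (bijective_coprod_toSpanSingleton hcompl hA0 hε0 hspan haa hbb hab)
  refine ⟨e.symm, fun x y => ?_⟩
  obtain ⟨p, rfl⟩ := e.surjective x
  obtain ⟨q, rfl⟩ := e.surjective y
  rw [LinearEquiv.symm_apply_eq, e.symm_apply_apply, e.symm_apply_apply]
  exact hf p q

theorem K3mulC_zero_self (x : ℂ × ℂ × ℂ) : K3mulC 0 x x = x.1 • x := by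
  obtain ⟨x1, x2, x3⟩ := x
  simp only [K3mulC, Prod.smul_mk, smul_eq_mul, Prod.mk.injEq]
  refine ⟨by ring, by ring, by ring⟩

-- For `λ = 1`, `(ε + b)² = ε + 2a + b`.
theorem not_exists_K3mulC_zero_equiv_one :
    ¬∃ e : (ℂ × ℂ × ℂ) ≃ₗ[ℂ] ℂ × ℂ × ℂ,
      ∀ x y : ℂ × ℂ × ℂ, e (K3mulC 0 x y) = K3mulC 1 (e x) (e y) := by
  rintro ⟨e, he⟩
  have h := he (e.symm (1, 0, 1)) (e.symm (1, 0, 1))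
  rw [K3mulC_zero_self, map_smul, e.apply_symm_apply] at h
  simp only [K3mulC, Prod.smul_mk, smul_eq_mul, Prod.mk.injEq] at h
  norm_num at h

theorem stmt16_general {A : Type*} [AddCommGroup A] [Module ℂ A]
    (mul : A →ₗ[ℂ] A →ₗ[ℂ] A)
    (A0 A1 : Submodule ℂ A) (hcompl : IsCompl A0 A1)
    (h01 : ∀ x ∈ A0, ∀ y ∈ A1, mul x y ∈ A1)
    (h11 : ∀ x ∈ A1, ∀ y ∈ A1, mul x y ∈ A0)
    (hcomm0 : ∀ x ∈ A0, ∀ y : A, mul x y = mul y x)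
    (hcomm1 : ∀ x ∈ A1, ∀ y ∈ A1, mul x y = -mul y x)
    (ε : A) (hε0 : ε ≠ 0) (hA0 : A0 = Submodule.span ℂ {ε})
    (hεsq : mul ε ε = ε)
    (hsimple : ∀ I : Submodule ℂ A,
      (∀ x ∈ I, ∀ y : A, mul x y ∈ I ∧ mul y x ∈ I) → I = ⊥ ∨ I = ⊤)
    (T : A →ₗ[ℂ] A)
    (hT0 : ∀ x ∈ A0, T x ∈ A1) (hT1 : ∀ x ∈ A1, T x ∈ A0)
    (hLeib0 : ∀ x ∈ A0, ∀ y : A, T (mul x y) = mul (T x) y + mul x (T y))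
    (hLeib1 : ∀ x ∈ A1, ∀ y : A, T (mul x y) = mul (T x) y - mul x (T y))
    (hTne : T ≠ 0) :
    (∃ lam : ℂ, (lam = 0 ∨ lam = 1) ∧
      ∃ e : A ≃ₗ[ℂ] ℂ × ℂ × ℂ, ∀ x y : A, e (mul x y) = K3mulC lam (e x) (e y)) ∧
    ¬∃ e : (ℂ × ℂ × ℂ) ≃ₗ[ℂ] ℂ × ℂ × ℂ,
      ∀ x y : ℂ × ℂ × ℂ, e (K3mulC 0 x y) = K3mulC 1 (e x) (e y) := by
  refine ⟨?_, not_exists_K3mulC_zero_equiv_one⟩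
  obtain ⟨a, b, μ, hεa, hεb, hab, hba, hspan⟩ := exists_odd_pair hcompl h01 h11 hcomm0 hcomm1
    hε0 hA0 hεsq hsimple hT0 hT1 hLeib0 hLeib1 hTne
  obtain ⟨lam, hlam, a', b', hεa', hεb', hab', hspan'⟩ := exists_normal_form hεa hεb hab hba
  exact ⟨lam, hlam, exists_linearEquiv_K3mulC hcompl hcomm0 hcomm1 hε0 hA0 hεsq hεa' hεb' hab'
    (hspan'.trans hspan)⟩

/-- Up to isomorphism there are exactly two simple ℤ/2-graded
commutative algebras over ℂ with even part `A⁰ = ℂ·ε` admitting a nontrivial odd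
derivation: the tiny Kaplansky superalgebra `K₃` (`ε·b = (1/2)b`) and its deformation
with `ε·b = (1/2)b + a`; both are 3-dimensional with basis `{ε; a, b}`,
`ε·a = (1/2)a` and `a·b = ε`.  (Any such algebra is isomorphic to one of the two,
and the two are not isomorphic to each other.) -/
theorem stmt16 {A : Type*} [AddCommGroup A] [Module ℂ A]
    (mul : A →ₗ[ℂ] A →ₗ[ℂ] A)
    (A0 A1 : Submodule ℂ A) (hcompl : IsCompl A0 A1)
    (h00 : ∀ x ∈ A0, ∀ y ∈ A0, mul x y ∈ A0)
    (h01 : ∀ x ∈ A0, ∀ y ∈ A1, mul x y ∈ A1)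
    (h10 : ∀ x ∈ A1, ∀ y ∈ A0, mul x y ∈ A1)
    (h11 : ∀ x ∈ A1, ∀ y ∈ A1, mul x y ∈ A0)
    (hcomm0 : ∀ x ∈ A0, ∀ y : A, mul x y = mul y x)
    (hcomm1 : ∀ x ∈ A1, ∀ y ∈ A1, mul x y = -mul y x)
    (ε : A) (hε0 : ε ≠ 0) (hA0 : A0 = Submodule.span ℂ {ε})
    (hεsq : mul ε ε = ε)
    (hsimple : ∀ I : Submodule ℂ A,
      (∀ x ∈ I, ∀ y : A, mul x y ∈ I ∧ mul y x ∈ I) → I = ⊥ ∨ I = ⊤)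
    (T : A →ₗ[ℂ] A)
    (hT0 : ∀ x ∈ A0, T x ∈ A1) (hT1 : ∀ x ∈ A1, T x ∈ A0)
    (hLeib0 : ∀ x ∈ A0, ∀ y : A, T (mul x y) = mul (T x) y + mul x (T y))
    (hLeib1 : ∀ x ∈ A1, ∀ y : A, T (mul x y) = mul (T x) y - mul x (T y))
    (hTne : T ≠ 0) :
    (∃ lam : ℂ, (lam = 0 ∨ lam = 1) ∧
      ∃ e : A ≃ₗ[ℂ] ℂ × ℂ × ℂ, ∀ x y : A, e (mul x y) = K3mulC lam (e x) (e y)) ∧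
    ¬∃ e : (ℂ × ℂ × ℂ) ≃ₗ[ℂ] ℂ × ℂ × ℂ,
      ∀ x y : ℂ × ℂ × ℂ, e (K3mulC 0 x y) = K3mulC 1 (e x) (e y) :=
  stmt16_general mul A0 A1 hcompl h01 h11 hcomm0 hcomm1 ε hε0 hA0 hεsq hsimple T hT0 hT1 hLeib0
    hLeib1 hTne
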